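/- For every x ∈ ℝ³ with ‖x‖ < 2π, the left Jacobian matrix J_ℓ(x^∧) = Σ_{n≥0} (x^∧)ⁿ/(n+1)! ∈ ℝ^{3×3} is invertible. -/

import Mathlib

/-!
Since `(x^∧)³ = -‖x‖² x^∧`, the series collapses to `J_ℓ(x^∧) = 1 + a x^∧ + b (x^∧)²`, where, with
`θ = ‖x‖`, the cosine and sine series give `θ² a = 1 - cos θ` and `θ - θ³ b = sin θ`. A direct
computation gives `det J_ℓ(x^∧) = (1 - θ² b)² + a² θ²`, and `θ²` times this equals
`sin² θ + (1 - cos θ)² = 2 (1 - cos θ)`, which is nonzero for `0 < θ < 2π`.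
-/

open Matrix

noncomputable section

/-- The hat map `ℝ³ → 𝔰𝔬(3)`. -/
def hat (x : Fin 3 → ℝ) : Matrix (Fin 3) (Fin 3) ℝ :=
  !![0, -x 2, x 1; x 2, 0, -x 0; -x 1, x 0, 0]

/-- The left Jacobian `J_ℓ(X) = Σ_{k≥0} Xᵏ/(k+1)!`. -/
def leftJacobian (X : Matrix (Fin 3) (Fin 3) ℝ) : Matrix (Fin 3) (Fin 3) ℝ :=
  ∑' k : ℕ, ((Nat.factorial (k + 1) : ℝ)⁻¹) • X ^ k

open Nat Real

section CubeRelation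

variable {A : Type*} [Ring A] [Algebra ℝ A]

lemma pow_two_mul_add_one_of_pow_three {X : A} {t : ℝ} (hX : X ^ 3 = -t • X) (k : ℕ) :
    X ^ (2 * k + 1) = (-t) ^ k • X := by
  induction k with
  | zero => simp
  | succ k ih =>
    rw [show 2 * (k + 1) + 1 = 2 * k + 1 + 2 by ring, pow_add, ih, smul_mul_assoc,
      ← pow_succ' X 2, hX, smul_smul, pow_succ]

lemma pow_two_mul_add_two_of_pow_three {X : A} {t : ℝ} (hX : X ^ 3 = -t • X) (k : ℕ) :
    X ^ (2 * k + 2) = (-t) ^ k • X ^ 2 := by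
  rw [pow_succ, pow_two_mul_add_one_of_pow_three hX, smul_mul_assoc, ← pow_two]

lemma hasSum_pow_div_factorial_succ_of_pow_three [TopologicalSpace A] [IsTopologicalAddGroup A]
    [ContinuousSMul ℝ A] {X : A} {t a b : ℝ} (hX : X ^ 3 = -t • X)
    (ha : HasSum (fun k : ℕ => (-t) ^ k / (2 * k + 2)!) a)
    (hb : HasSum (fun k : ℕ => (-t) ^ k / (2 * k + 3)!) b) :
    HasSum (fun n : ℕ => ((n + 1)! : ℝ)⁻¹ • X ^ n) (1 + a • X + b • X ^ 2) := by
  rw [← hasSum_nat_add_iff' 1]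
  simp only [Finset.sum_range_one, pow_zero, zero_add, factorial_one, cast_one, inv_one, one_smul]
  rw [add_assoc, add_sub_cancel_left]
  refine HasSum.even_add_odd (f := fun n : ℕ => ((n + 1 + 1)! : ℝ)⁻¹ • X ^ (n + 1)) ?_ ?_
  · convert ha.smul_const X using 2 with k
    rw [pow_two_mul_add_one_of_pow_three hX, smul_smul, div_eq_inv_mul]
  · convert hb.smul_const (X ^ 2) using 2 with k
    rw [show 2 * k + 1 + 1 = 2 * k + 2 by ring, pow_two_mul_add_two_of_pow_three hX, smul_smul,
      div_eq_inv_mul]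

end CubeRelation

lemma summable_pow_div_factorial_of_le (t : ℝ) {c : ℕ → ℕ} (hc : ∀ k, k ≤ c k) :
    Summable fun k : ℕ => t ^ k / (c k)! := by
  refine .of_norm_bounded (Real.summable_pow_div_factorial |t|) fun k => ?_
  rw [norm_div, norm_pow, Real.norm_eq_abs, RCLike.norm_natCast]
  gcongr
  exact hc k

lemma hasSum_one_sub_cos (θ : ℝ) :
    HasSum (fun k : ℕ => θ ^ 2 * ((-θ ^ 2) ^ k / (2 * k + 2)!)) (1 - cos θ) := by
  have := ((hasSum_nat_add_iff' 1).2 (Real.hasSum_cos θ)).mul_left (-1)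
  convert! this using 1
  · funext k
    rw [show 2 * (k + 1) = 2 * k + 2 by ring]
    ring
  · simp

lemma hasSum_sub_sin (θ : ℝ) :
    HasSum (fun k : ℕ => θ ^ 3 * ((-θ ^ 2) ^ k / (2 * k + 3)!)) (θ - sin θ) := by
  have := ((hasSum_nat_add_iff' 1).2 (Real.hasSum_sin θ)).mul_left (-1)
  convert! this using 1
  · funext k
    rw [show 2 * (k + 1) + 1 = 2 * k + 3 by ring]
    ring
  · simp

lemma hat_pow_three (x : Fin 3 → ℝ) : hat x ^ 3 = -(x ⬝ᵥ x) • hat x := by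
  ext i j
  fin_cases i <;> fin_cases j <;>
    simp [hat, pow_succ, Matrix.mul_apply, Fin.sum_univ_three, dotProduct] <;> ring

lemma det_one_add_smul_hat_add_smul_hat_sq (x : Fin 3 → ℝ) (a b : ℝ) :
    (1 + a • hat x + b • hat x ^ 2).det = (1 - (x ⬝ᵥ x) * b) ^ 2 + a ^ 2 * (x ⬝ᵥ x) := by
  simp [det_fin_three, hat, pow_two, Fin.sum_univ_three, dotProduct]
  ring

lemma one_sub_mul_sq_add_sq_mul_ne_zero {θ a b : ℝ} (hθ₀ : 0 ≤ θ) (hθ : θ < 2 * π)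
    (ha : θ ^ 2 * a = 1 - cos θ) (hb : θ - θ ^ 3 * b = sin θ) :
    (1 - θ ^ 2 * b) ^ 2 + a ^ 2 * θ ^ 2 ≠ 0 := by
  rcases hθ₀.eq_or_lt with rfl | hθ₀
  · norm_num
  have hcos : cos θ ≠ 1 := fun h =>
    hθ₀.ne' ((cos_eq_one_iff_of_lt_of_lt (by linarith [two_pi_pos]) hθ).1 h)
  have key : θ ^ 2 * ((1 - θ ^ 2 * b) ^ 2 + a ^ 2 * θ ^ 2) = 2 * (1 - cos θ) := by
    linear_combination (θ - θ ^ 3 * b + sin θ) * hb + (θ ^ 2 * a + 1 - cos θ) * ha +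
      sin_sq_add_cos_sq θ
  intro h
  rw [h, mul_zero] at key
  exact hcos (by linarith)

theorem leftJacobian_isUnit (x : Fin 3 → ℝ)
    (hx : Real.sqrt (x ⬝ᵥ x) < 2 * Real.pi) :
    IsUnit (leftJacobian (hat x)) := by
  set θ := √(x ⬝ᵥ x)
  have hxx : x ⬝ᵥ x = θ ^ 2 := (sq_sqrt (by simpa using dotProduct_star_self_nonneg x)).symm
  obtain ⟨a, ha⟩ := summable_pow_div_factorial_of_le (-θ ^ 2) (c := fun k => 2 * k + 2) (by omega)
  obtain ⟨b, hb⟩ := summable_pow_div_factorial_of_le (-θ ^ 2) (c := fun k => 2 * k + 3) (by omega)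
  have hJ : leftJacobian (hat x) = 1 + a • hat x + b • hat x ^ 2 := by
    rw [← hxx] at ha hb
    exact (hasSum_pow_div_factorial_succ_of_pow_three (hat_pow_three x) ha hb).tsum_eq
  have hcos : θ ^ 2 * a = 1 - cos θ := (ha.mul_left _).unique (hasSum_one_sub_cos θ)
  have hsin : θ - θ ^ 3 * b = sin θ := by
    linarith [(hb.mul_left (θ ^ 3)).unique (hasSum_sub_sin θ)]
  rw [isUnit_iff_isUnit_det, hJ, det_one_add_smul_hat_add_smul_hat_sq, hxx, isUnit_iff_ne_zero]
  exact one_sub_mul_sq_add_sq_mul_ne_zero (sqrt_nonneg _) hx hcos hsin
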